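/- Suppose G : ℤ² → ℝ satisfies (i) G(γ(z)) = G(z) for every γ ∈ D₃ and z ∈ ℤ², and (ii) ΔG(z) = −1 if z = (0,0) and ΔG(z) = 0 for every z ≠ (0,0). Fix z₀ = (x₀, y₀) with x₀ ≥ 1 and y₀ ≥ 1, and define G_W(z) = Σ_{γ ∈ D₃} sgn(γ) · G(z − γ(z₀)). Then: (a) G_W(z) = 0 for every z lying on either coordinate axis (z = (x,0) or z = (0,y) for some integer x or y); and (b) ΔG_W(z) = −1 if z = z₀ and ΔG_W(z) = 0 for every other z with both coordinates ≥ 1. In particular G_W is the Dirichlet Green's function of the 60° wedge (the quadrant in sheared coordinates) with pole at z₀. -/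

import Mathlib

/-- The discrete triangular-lattice Laplacian, in the sheared coordinates in which the
60° wedge becomes the quadrant. -/
noncomputable def lap (f : ℤ × ℤ → ℝ) (z : ℤ × ℤ) : ℝ :=
  (1/3) * (f (z + (1, 0)) + f (z + (-1, 1)) + f (z + (0, -1))) - f z

/-- Rotation by 120° in sheared coordinates. -/
def rot (p : ℤ × ℤ) : ℤ × ℤ := (-p.1 - p.2, p.1)

/-- Reflection fixing the vertical axis, in sheared coordinates. -/
def refl3 (p : ℤ × ℤ) : ℤ × ℤ := (-p.1, p.1 + p.2)

/-- The dihedral group `D₃ = {id, r, r², s, s∘r, s∘r²}`, each element paired with its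
sign (`+1` for rotations, `−1` for reflections). -/
noncomputable def D3 : List ((ℤ × ℤ → ℤ × ℤ) × ℝ) :=
  [(id, 1), (rot, 1), (rot ∘ rot, 1), (refl3, -1), (refl3 ∘ rot, -1), (refl3 ∘ rot ∘ rot, -1)]

/-- The method-of-images function `G_W(z) = Σ_{γ ∈ D₃} sgn(γ) G(z − γ(z₀))`. -/
noncomputable def GW (G : ℤ × ℤ → ℝ) (z₀ : ℤ × ℤ) (z : ℤ × ℤ) : ℝ :=
  (D3.map (fun γ => γ.2 * G (z - γ.1 z₀))).sum

/-!
Method of images. The six poles `γ z₀` are the three rotated copies of `z₀`, with sign `+1`,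
and their mirror images under `s`, with sign `−1`. A reflection `σ ∈ D₃`
that fixes `z` gives `G (z - σ w) = G (σ (z - w)) = G (z - w)`; since `s` fixes the vertical
axis and `s ∘ r` the horizontal one, the six terms of `G_W` cancel in pairs on both axes.
Since the Laplacian commutes with translations, `ΔG_W(z)` is the signed sum of the
`ΔG(z - γ z₀) = -δ(z, γ z₀)`, and for `z₀` in the open quadrant every image other than `z₀`
has a nonpositive coordinate, so only the pole `z₀` itself contributes there.
-/

lemma rot_rot_rot (p : ℤ × ℤ) : rot (rot (rot p)) = p := by
  ext <;> simp only [rot] <;> ring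

lemma rot_sub (p q : ℤ × ℤ) : rot (p - q) = rot p - rot q := by
  ext
  · simp only [rot, Prod.fst_sub, Prod.snd_sub]; ring
  · simp only [rot, Prod.fst_sub, Prod.snd_sub]

lemma refl3_sub (p q : ℤ × ℤ) : refl3 (p - q) = refl3 p - refl3 q := by
  ext <;> simp only [refl3, Prod.fst_sub, Prod.snd_sub] <;> ring

lemma refl3_zero_left (y : ℤ) : refl3 (0, y) = (0, y) := by
  simp [refl3]

lemma refl3_rot_zero_right (x : ℤ) : refl3 (rot (x, 0)) = (x, 0) := by
  simp [refl3, rot]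

lemma GW_apply (G : ℤ × ℤ → ℝ) (z₀ z : ℤ × ℤ) :
    GW G z₀ z = G (z - z₀) + G (z - rot z₀) + G (z - rot (rot z₀))
      - G (z - refl3 z₀) - G (z - refl3 (rot z₀)) - G (z - refl3 (rot (rot z₀))) := by
  simp only [GW, D3, List.map_cons, List.map_nil, List.sum_cons, List.sum_nil,
    Function.comp, id]
  ring

lemma lap_GW (G : ℤ × ℤ → ℝ) (z₀ z : ℤ × ℤ) :
    lap (GW G z₀) z = lap G (z - z₀) + lap G (z - rot z₀) + lap G (z - rot (rot z₀))
      - lap G (z - refl3 z₀) - lap G (z - refl3 (rot z₀)) - lap G (z - refl3 (rot (rot z₀))) := by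
  simp only [lap, GW_apply, sub_add_eq_add_sub]
  ring

lemma apply_sub_map_eq_of_map_eq {α β : Type*} [Sub α] {G : α → β} {σ : α → α}
    (hG : ∀ p, G (σ p) = G p) (hσ : ∀ p q, σ (p - q) = σ p - σ q) {z : α} (hz : σ z = z)
    (w : α) : G (z - σ w) = G (z - w) := by
  rw [← hG (z - w), hσ, hz]

lemma GW_zero_left {G : ℤ × ℤ → ℝ} (hG : ∀ p, G (refl3 p) = G p) (z₀ : ℤ × ℤ) (y : ℤ) :
    GW G z₀ (0, y) = 0 := by
  have hpair := apply_sub_map_eq_of_map_eq hG refl3_sub (refl3_zero_left y)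
  rw [GW_apply, hpair, hpair, hpair]
  ring

lemma GW_zero_right {G : ℤ × ℤ → ℝ} (hG : ∀ p, G (refl3 (rot p)) = G p) (z₀ : ℤ × ℤ)
    (x : ℤ) : GW G z₀ (x, 0) = 0 := by
  have hpair := apply_sub_map_eq_of_map_eq (σ := refl3 ∘ rot) hG
    (fun p q => by simp only [Function.comp, rot_sub, refl3_sub]) (refl3_rot_zero_right x)
  have h₁ := hpair z₀
  have h₂ := hpair (rot z₀)
  have h₃ := hpair (rot (rot z₀))
  simp only [Function.comp, rot_rot_rot] at h₁ h₂ h₃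
  rw [GW_apply]
  linarith

lemma lap_GW_of_pos {G : ℤ × ℤ → ℝ} (hG : ∀ z : ℤ × ℤ, z ≠ (0, 0) → lap G z = 0)
    {z₀ z : ℤ × ℤ} (hx₀ : 1 ≤ z₀.1) (hy₀ : 1 ≤ z₀.2) (hx : 1 ≤ z.1) (hy : 1 ≤ z.2) :
    lap (GW G z₀) z = lap G (z - z₀) := by
  have off : ∀ w : ℤ × ℤ, w.1 < 1 ∨ w.2 < 1 → lap G (z - w) = 0 := fun w hw =>
    hG _ (sub_ne_zero.2 fun h => by subst h; omega)
  rw [lap_GW, off (rot z₀) (by simp only [rot]; omega),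
    off (rot (rot z₀)) (by simp only [rot]; omega), off (refl3 z₀) (by simp only [refl3]; omega),
    off (refl3 (rot z₀)) (by simp only [refl3, rot]; omega),
    off (refl3 (rot (rot z₀))) (by simp only [refl3, rot]; omega)]
  ring

/-- If `G` is `D₃`-invariant and satisfies `ΔG = −δ₀` on `ℤ²`, then for interior `z₀`
the alternating sum `G_W(z) = Σ_{γ ∈ D₃} sgn(γ) G(z − γ(z₀))` vanishes on both coordinate
axes and satisfies `ΔG_W = −δ_{z₀}` in the open quadrant: it is the Dirichlet Green's
function of the 60° wedge with pole at `z₀`. -/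
theorem wedge_green_function (G : ℤ × ℤ → ℝ)
    (hinv : ∀ γ ∈ D3, ∀ z : ℤ × ℤ, G (γ.1 z) = G z)
    (hlap0 : lap G (0, 0) = -1)
    (hlap : ∀ z : ℤ × ℤ, z ≠ (0, 0) → lap G z = 0)
    (z₀ : ℤ × ℤ) (hx : 1 ≤ z₀.1) (hy : 1 ≤ z₀.2) :
    (∀ x : ℤ, GW G z₀ (x, 0) = 0) ∧ (∀ y : ℤ, GW G z₀ (0, y) = 0) ∧
    lap (GW G z₀) z₀ = -1 ∧
    (∀ z : ℤ × ℤ, 1 ≤ z.1 → 1 ≤ z.2 → z ≠ z₀ → lap (GW G z₀) z = 0) := by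
  have hs : ∀ p, G (refl3 p) = G p := hinv (refl3, -1) (by simp [D3])
  have hsr : ∀ p, G (refl3 (rot p)) = G p := hinv (refl3 ∘ rot, -1) (by simp [D3])
  refine ⟨GW_zero_right hsr z₀, GW_zero_left hs z₀, ?_, fun z hzx hzy hz => ?_⟩
  · rw [lap_GW_of_pos hlap hx hy hx hy, sub_self]
    exact hlap0
  · rw [lap_GW_of_pos hlap hx hy hzx hzy]
    exact hlap _ (sub_ne_zero.2 hz)
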